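/- Let I ⊆ S be a nonzero saturated Borel ideal containing a power of x_1 (equivalently, the projective scheme defined by I is 0-dimensional), and ≺ a term order. If I is a reg-segment ideal with respect to ≺ then I is a segment ideal with respect to ≺; hence for such I the notions segment ideal, hilb-segment ideal and reg-segment ideal with respect to ≺ are equivalent. -/

import Mathlib

open Polynomial

/-- Exponent vectors of monomials (terms) of `S = K[x_0, …, x_n]`. -/
abbrev Expo (n : ℕ) := Fin (n + 1) → ℕ

/-- The degree of a term. -/
def deg {n : ℕ} (α : Expo n) : ℕ := ∑ i, α i

/-- The exponent vector of the variable `x_i`. -/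
def sing {n : ℕ} (i : Fin (n + 1)) : Expo n := Pi.single i 1

/-- `MoveDown α β` : the term `α` is obtained from `β` by an elementary move `e_j^-`,
i.e. `α = x_{j-1}·β/x_j` for some `j ≥ 1` with `β_j > 0`. -/
def MoveDown {n : ℕ} (α β : Expo n) : Prop :=
  ∃ j k : Fin (n + 1), (k : ℕ) + 1 = (j : ℕ) ∧ α + sing j = β + sing k

/-- The Borel (partial) order `α <_B β` : transitive closure of elementary moves `e_j^-`. -/
def BorelLt {n : ℕ} (α β : Expo n) : Prop := Relation.TransGen MoveDown α β

/-- A Borel set: a set of terms closed upwards under the Borel order. -/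
def IsBorelSet {n : ℕ} (B : Set (Expo n)) : Prop :=
  ∀ α β : Expo n, α ∈ B → MoveDown α β → β ∈ B

/-- A monomial ideal, identified with its set of terms: closed under multiplication
by arbitrary terms. -/
def IsMonIdeal {n : ℕ} (M : Set (Expo n)) : Prop :=
  ∀ α ∈ M, ∀ γ : Expo n, α + γ ∈ M

/-- A Borel ideal: a monomial ideal which is a Borel set in every degree. -/
def IsBorelIdeal {n : ℕ} (M : Set (Expo n)) : Prop :=
  IsMonIdeal M ∧ IsBorelSet M

/-- `𝒩(M)_t` : the set of degree-`t` terms not lying in `M`. -/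
def coIdeal {n : ℕ} (M : Set (Expo n)) (t : ℕ) : Set (Expo n) :=
  {α | deg α = t ∧ α ∉ M}

/-- `p` is the Hilbert polynomial of `S/M` : `|𝒩(M)_t| = p(t)` for all `t` large. -/
def HasHilbPoly {n : ℕ} (M : Set (Expo n)) (p : Polynomial ℚ) : Prop :=
  ∃ N : ℕ, ∀ t : ℕ, N ≤ t → ((coIdeal M t).ncard : ℚ) = p.eval (t : ℚ)

/-- Saturation for monomial ideals: a term `α` with `x_i^{k_i}·α ∈ M` for suitable
powers of every variable already lies in `M`. -/
def IsSaturatedIdeal {n : ℕ} (M : Set (Expo n)) : Prop :=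
  ∀ α : Expo n, (∀ i : Fin (n + 1), ∃ k : ℕ, α + k • sing i ∈ M) → α ∈ M

/-- A term order on the terms of `S`: a multiplicative (strict) total order with `1`
as least element and `x_0 ≺ x_1 ≺ … ≺ x_n`. -/
structure TermOrder (n : ℕ) where
  lt : Expo n → Expo n → Prop
  irrefl : ∀ a : Expo n, ¬ lt a a
  trans : ∀ a b c : Expo n, lt a b → lt b c → lt a c
  total : ∀ a b : Expo n, a ≠ b → lt a b ∨ lt b a
  add_right : ∀ a b c : Expo n, lt a b → lt (a + c) (b + c)
  zero_lt : ∀ a : Expo n, a ≠ 0 → lt 0 a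
  var_lt : ∀ i j : Fin (n + 1), i < j → lt (sing i) (sing j)

/-- `M ∩ 𝕋_t` is a segment w.r.t. the order `lt`. -/
def IsSegmentAt {n : ℕ} (lt : Expo n → Expo n → Prop) (M : Set (Expo n)) (t : ℕ) : Prop :=
  ∀ τ σ : Expo n, τ ∈ M → deg τ = t → deg σ = t → lt τ σ → σ ∈ M

/-- `M` is a segment ideal w.r.t. the order `lt`. -/
def IsSegmentIdeal {n : ℕ} (lt : Expo n → Expo n → Prop) (M : Set (Expo n)) : Prop :=
  ∀ t : ℕ, IsSegmentAt lt M t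

/-- `α` is a minimal monomial generator of the monomial ideal `M`. -/
def IsMinGen {n : ℕ} (M : Set (Expo n)) (α : Expo n) : Prop :=
  α ∈ M ∧ ∀ β γ : Expo n, β + γ = α → β ∈ M → γ = 0

/-- The ideal generated by the elements of `M` of degree `≤ s - 1`. -/
def genBelow {n : ℕ} (M : Set (Expo n)) (s : ℕ) : Set (Expo n) :=
  {x | ∃ α γ : Expo n, α ∈ M ∧ deg α < s ∧ x = α + γ}

/-- `M` is a gen-segment ideal w.r.t. `lt`: for every `s` the minimal generators of
degree `s` are the greatest among the degree-`s` terms not in `⟨M_{≤ s-1}⟩`. -/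
def IsGenSegment {n : ℕ} (lt : Expo n → Expo n → Prop) (M : Set (Expo n)) : Prop :=
  ∀ α : Expo n, IsMinGen M α → ∀ σ : Expo n, deg σ = deg α →
    σ ∉ genBelow M (deg α) → ¬ IsMinGen M σ → lt σ α

/-- `δ` is the maximal degree of a minimal monomial generator of `M`. -/
def IsMaxGenDeg {n : ℕ} (M : Set (Expo n)) (δ : ℕ) : Prop :=
  (∃ α : Expo n, IsMinGen M α ∧ deg α = δ) ∧ ∀ α : Expo n, IsMinGen M α → deg α ≤ δ

/-- `p` is an admissible polynomial with Gotzmann decomposition of length `r`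
(so `r` is its Gotzmann number):
`p(z) = ∑_{i=1}^{r} binom(z + a_i - (i-1), a_i)` with `a_1 ≥ … ≥ a_r ≥ 0`. -/
def IsGotzmannDecomp (p : Polynomial ℚ) (r : ℕ) : Prop :=
  ∃ a : Fin r → ℕ, Antitone a ∧
    ∀ t : ℕ, r ≤ t →
      p.eval (t : ℚ) = ∑ i : Fin r, ((t + a i - (i : ℕ)).choose (a i) : ℚ)

/-- An admissible polynomial: one admitting a Gotzmann decomposition. -/
def IsAdmissible (p : Polynomial ℚ) : Prop := ∃ r : ℕ, IsGotzmannDecomp p r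

/-- Setting `x_0 = x_1 = 1` in a term. -/
def trunc01 {n : ℕ} (α : Expo n) : Expo n := fun i => if (i : ℕ) ≤ 1 then 0 else α i

/-- The `x_1`-saturation of a monomial ideal: the ideal generated by the minimal
generators with `x_0 = x_1 = 1`. -/
def xOneSat {n : ℕ} (M : Set (Expo n)) : Set (Expo n) :=
  {x | ∃ α γ : Expo n, IsMinGen M α ∧ x = trunc01 α + γ}

/-- The lexicographic comparison (intended for terms of equal degree):
`α ≺_lex β` iff `α_k < β_k` at the largest index `k` where they differ. -/
def LexLt {n : ℕ} (α β : Expo n) : Prop :=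
  ∃ k : Fin (n + 1), α k < β k ∧ ∀ j : Fin (n + 1), k < j → α j = β j

/-- The reverse lexicographic comparison (intended for terms of equal degree):
`α ≺_revlex β` iff `α_h > β_h` at the smallest index `h` where they differ. -/
def RevLexLt {n : ℕ} (α β : Expo n) : Prop :=
  ∃ h : Fin (n + 1), β h < α h ∧ ∀ j : Fin (n + 1), j < h → α j = β j

/-- A graded term order. -/
def IsGraded {n : ℕ} (ord : TermOrder n) : Prop :=
  ∀ α β : Expo n, deg α < deg β → ord.lt α β

/-- A reverse term order: a graded term order such that, on terms of equal degree,
a strictly larger exponent of `x_0` makes a term strictly smaller. -/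
def IsReverseOrder {n : ℕ} (ord : TermOrder n) : Prop :=
  IsGraded ord ∧ ∀ α β : Expo n, deg α = deg β → β 0 < α 0 → ord.lt α β

/-!
Since `I` is Borel and contains `x_1^k`, it contains `x_i^k` for every `i ≥ 1`, so saturation
makes `x_0` a non-zero-divisor modulo `I`: `x_0·α ∈ I` implies `α ∈ I`. Multiplying and dividing
by `x_0` therefore shows that being a segment in degree `t + 1` implies being one in degree `t`.
Conversely, in degrees `t ≥ δ` every `τ ∈ I` has a divisor `τ/x_j ∈ I`, and a Borel-minimality
argument shows that every `x_0`-free term of degree `≥ δ` lies in `I`; a term `σ ≻ τ` outside `I`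
would then be divisible by `x_0`, and `σ/x_0 ≻ τ/x_j` contradicts the segment property in degree
`t`. So a segment in degree `δ` is a segment in every degree.

For the comparison with `r`: the number of terms of degree `t` outside `I` is bounded (their
`x_i`-exponents, `i ≥ 1`, are `< k`), which forces every `a_i` in the Gotzmann decomposition to
vanish, so the Hilbert polynomial is the constant `r`. A minimal generator of degree `δ` is
`x_0`-free, and `x_0`-multiples of its divisors give `δ` terms of each large degree outside `I`.
Hence `δ ≤ r`.
-/

section Degree

variable {n : ℕ}

lemma sing_apply (i j : Fin (n + 1)) : sing i j = if j = i then 1 else 0 := by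
  simp [sing, Pi.single_apply]

lemma sing_ne_zero (i : Fin (n + 1)) : sing i ≠ (0 : Expo n) := by
  simp [sing]

lemma sing_le_iff {i : Fin (n + 1)} {α : Expo n} : sing i ≤ α ↔ 0 < α i := by
  refine ⟨fun h => by simpa [sing_apply, Nat.one_le_iff_ne_zero, Nat.pos_iff_ne_zero] using h i,
    fun h j => ?_⟩
  rw [sing_apply]
  split_ifs with hj
  · exact hj ▸ h
  · exact Nat.zero_le _

lemma deg_add (α β : Expo n) : deg (α + β) = deg α + deg β := by
  simp [deg, Finset.sum_add_distrib]

lemma deg_sing (i : Fin (n + 1)) : deg (sing i) = 1 := by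
  simp [deg, sing_apply]

lemma deg_nsmul (m : ℕ) (α : Expo n) : deg (m • α) = m * deg α := by
  simp [deg, Finset.mul_sum]

lemma deg_mono {α β : Expo n} (h : α ≤ β) : deg α ≤ deg β :=
  Finset.sum_le_sum fun i _ => h i

lemma apply_le_deg (α : Expo n) (i : Fin (n + 1)) : α i ≤ deg α :=
  Finset.single_le_sum (fun _ _ => Nat.zero_le _) (Finset.mem_univ i)

lemma deg_sub_sing_add_one {α : Expo n} {j : Fin (n + 1)} (h : 0 < α j) :
    deg (α - sing j) + 1 = deg α := by
  have := congrArg deg (tsub_add_cancel_of_le (sing_le_iff.2 h))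
  rwa [deg_add, deg_sing] at this

lemma exists_le_deg_eq (α : Expo n) {d : ℕ} (hd : d ≤ deg α) : ∃ β ≤ α, deg β = d := by
  induction d with
  | zero => exact ⟨0, fun _ => Nat.zero_le _, by simp [deg]⟩
  | succ d ih =>
    obtain ⟨β, hβα, hβd⟩ := ih (by omega)
    obtain ⟨j, hj⟩ : ∃ j, β j < α j := by
      by_contra! h
      rw [le_antisymm hβα h] at hβd
      omega
    refine ⟨β + sing j, fun i => ?_, by rw [deg_add, deg_sing, hβd]⟩
    by_cases hij : i = j
    · subst hij; simpa [sing_apply] using hj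
    · simpa [sing_apply, hij] using hβα i

end Degree

section Ideal

variable {n : ℕ} {I : Set (Expo n)}

lemma IsBorelSet.add_sing_mem_of_le (hB : IsBorelSet I) {c : Expo n} {a b : Fin (n + 1)}
    (hab : a ≤ b) (h : c + sing a ∈ I) : c + sing b ∈ I := by
  obtain ⟨d, hd⟩ := Nat.exists_eq_add_of_le (Fin.le_def.1 hab)
  induction d generalizing b with
  | zero => rwa [show b = a from Fin.ext (by omega)]
  | succ d ih =>
    have hb : (a : ℕ) + d < n + 1 := by omega
    refine hB _ _ (ih (b := ⟨a + d, hb⟩) (Fin.le_def.2 (by simp)) rfl) ⟨b, ⟨a + d, hb⟩, ?_, ?_⟩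
    · simp only; omega
    · exact add_right_comm _ _ _

lemma IsBorelSet.add_nsmul_sing_mem_of_le (hB : IsBorelSet I) {a b : Fin (n + 1)} (hab : a ≤ b) :
    ∀ (m : ℕ) {c : Expo n}, c + m • sing a ∈ I → c + m • sing b ∈ I
  | 0, c, h => by simpa using h
  | m + 1, c, h => by
    have h' : c + sing b + m • sing a ∈ I := by
      rw [add_right_comm]
      exact hB.add_sing_mem_of_le hab (by rwa [add_assoc, ← succ_nsmul])
    have := hB.add_nsmul_sing_mem_of_le hab m h'
    rwa [add_assoc, ← succ_nsmul'] at this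

lemma IsBorelSet.sub_sing_mem_of_le (hB : IsBorelSet I) {g : Expo n} {i j : Fin (n + 1)}
    (hij : i ≤ j) (hi : 0 < g i) (hj : 0 < g j) (h : g - sing j ∈ I) : g - sing i ∈ I := by
  rcases eq_or_ne i j with rfl | hne
  · exact h
  have hi' : sing i ≤ g - sing j := sing_le_iff.2 (by simpa [sing_apply, hne] using hi)
  have hc : g - sing j - sing i + sing j = g - sing i := by
    funext x
    by_cases hxi : x = i <;> by_cases hxj : x = j <;> simp_all [sing_apply]; omega
  rw [← tsub_add_cancel_of_le hi'] at h
  exact hc ▸ hB.add_sing_mem_of_le hij h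

lemma exists_sub_sing_mem_of_not_isMinGen (hmon : IsMonIdeal I) {g : Expo n} (hg : g ∈ I)
    (hng : ¬ IsMinGen I g) : ∃ j, 0 < g j ∧ g - sing j ∈ I := by
  simp only [IsMinGen, hg, true_and, not_forall] at hng
  obtain ⟨β, γ, hβγ, hβ, hγ⟩ := hng
  obtain ⟨j, hj⟩ := Function.ne_iff.1 hγ
  rw [Pi.zero_apply] at hj
  have hγj : sing j ≤ γ := sing_le_iff.2 (Nat.pos_of_ne_zero hj)
  refine ⟨j, by have := congrFun hβγ j; simp only [Pi.add_apply] at this; omega, ?_⟩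
  rw [← hβγ, add_tsub_assoc_of_le hγj]
  exact hmon β hβ _

/-- Borel moves trade a removable variable `x_j`, `j ≥ 1`, of `g` for `x_1`. -/
lemma IsBorelIdeal.isMinGen_of_sub_sing_notMem (hI : IsBorelIdeal I) {e : Fin (n + 1)}
    (he : (e : ℕ) = 1) {g : Expo n} (hg : g ∈ I) (hg0 : g 0 = 0) (hge : g - sing e ∉ I) :
    IsMinGen I g := by
  by_contra hng
  obtain ⟨j, hj, hgj⟩ := exists_sub_sing_mem_of_not_isMinGen hI.1 hg hng
  have hj0 : (j : ℕ) ≠ 0 := fun h => by rw [show j = 0 from Fin.ext h, hg0] at hj; omega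
  have hej : e ≤ j := by rw [Fin.le_def, he]; omega
  have hge0 : 0 < g e := by
    by_contra h
    apply hge
    convert hg using 1
    funext x
    by_cases hx : x = e <;> simp_all [sing_apply]
  exact hge (hI.2.sub_sing_mem_of_le hej hge0 hj hgj)

lemma IsBorelIdeal.mem_of_apply_zero_eq_zero (hI : IsBorelIdeal I) {e : Fin (n + 1)}
    (he : (e : ℕ) = 1) {k : ℕ} (hk : k • sing e ∈ I) {δ : ℕ}
    (hδ : ∀ g, IsMinGen I g → deg g ≤ δ) {α : Expo n} (hα0 : α 0 = 0) (hdeg : δ ≤ deg α) :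
    α ∈ I := by
  classical
  by_contra hα
  -- With `m` least such that `α · x_1^m ∈ I`, this term is a minimal generator of degree `> δ`.
  have hex : ∃ m, α + m • sing e ∈ I := ⟨k, by rw [add_comm]; exact hI.1 _ hk α⟩
  obtain ⟨m, hmI, hm_min⟩ : ∃ m, α + m • sing e ∈ I ∧ ∀ m' < m, α + m' • sing e ∉ I :=
    ⟨Nat.find hex, Nat.find_spec hex, fun _ => Nat.find_min hex⟩
  have hm : m ≠ 0 := by rintro rfl; exact hα (by simpa using hmI)
  have he0 : (0 : Fin (n + 1)) ≠ e := fun h => by simp [← h] at he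
  have hmin : IsMinGen I (α + m • sing e) := by
    refine hI.isMinGen_of_sub_sing_notMem he hmI (by simp [sing_apply, hα0, he0]) ?_
    rw [show m = (m - 1) + 1 by omega, succ_nsmul, ← add_assoc, add_tsub_cancel_right]
    exact hm_min _ (by omega)
  have := hδ _ hmin
  rw [deg_add, deg_nsmul, deg_sing] at this
  omega

lemma mem_of_add_sing_zero_mem (hmon : IsMonIdeal I) (hsat : IsSaturatedIdeal I) {k : ℕ}
    (hpow : ∀ i : Fin (n + 1), i ≠ 0 → k • sing i ∈ I) {α : Expo n} (h : α + sing 0 ∈ I) :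
    α ∈ I :=
  hsat α fun i => if hi : i = 0 then ⟨1, by rwa [hi, one_smul]⟩
    else ⟨k, by rw [add_comm]; exact hmon _ (hpow i hi) α⟩

lemma add_nsmul_sing_zero_notMem (h0 : ∀ α : Expo n, α + sing 0 ∈ I → α ∈ I) {α : Expo n}
    (hα : α ∉ I) (m : ℕ) : α + m • sing 0 ∉ I := by
  induction m with
  | zero => simpa using hα
  | succ m ih => exact fun h => ih (h0 _ (by rwa [add_assoc, ← succ_nsmul]))

lemma IsMinGen.apply_zero_eq_zero (h0 : ∀ α : Expo n, α + sing 0 ∈ I → α ∈ I) {g : Expo n}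
    (hg : IsMinGen I g) : g 0 = 0 := by
  by_contra h
  have hg' : g - sing 0 + sing 0 = g := tsub_add_cancel_of_le (sing_le_iff.2 (by omega))
  exact sing_ne_zero 0 (hg.2 _ _ hg' (h0 _ (by rw [hg']; exact hg.1)))

end Ideal

namespace TermOrder

variable {n : ℕ} (ord : TermOrder n)

lemma lt_of_add_lt_add_right {a b c : Expo n} (h : ord.lt (a + c) (b + c)) : ord.lt a b := by
  rcases eq_or_ne a b with rfl | hab
  · exact absurd h (ord.irrefl _)
  · exact (ord.total a b hab).resolve_right fun hba =>
      ord.irrefl _ (ord.trans _ _ _ h (ord.add_right _ _ c hba))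

lemma lt_of_add_sing_lt_add_sing_zero {a b : Expo n} {j : Fin (n + 1)}
    (h : ord.lt (a + sing j) (b + sing 0)) : ord.lt a b := by
  rcases eq_or_ne j 0 with rfl | hj
  · exact ord.lt_of_add_lt_add_right h
  · refine ord.lt_of_add_lt_add_right (c := sing j) (ord.trans _ _ _ h ?_)
    rw [add_comm b, add_comm b]
    exact ord.add_right _ _ b (ord.var_lt 0 j ((Fin.pos_iff_ne_zero' j).2 hj))

end TermOrder

namespace IsSegmentAt

variable {n : ℕ} {I : Set (Expo n)} {ord : TermOrder n}

lemma of_succ (hmon : IsMonIdeal I) (h0 : ∀ α : Expo n, α + sing 0 ∈ I → α ∈ I) {t : ℕ}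
    (h : IsSegmentAt ord.lt I (t + 1)) : IsSegmentAt ord.lt I t :=
  fun τ σ hτ hdτ hdσ hlt => h0 σ <| h _ _ (hmon τ hτ _) (by rw [deg_add, deg_sing, hdτ])
    (by rw [deg_add, deg_sing, hdσ]) (ord.add_right _ _ _ hlt)

lemma of_le (hmon : IsMonIdeal I) (h0 : ∀ α : Expo n, α + sing 0 ∈ I → α ∈ I) {s t : ℕ}
    (hts : t ≤ s) (h : IsSegmentAt ord.lt I s) : IsSegmentAt ord.lt I t := by
  induction s, hts using Nat.le_induction with
  | base => exact h
  | succ s _ ih => exact ih (h.of_succ hmon h0)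

lemma succ (hI : IsBorelIdeal I) {e : Fin (n + 1)} (he : (e : ℕ) = 1) {k : ℕ}
    (hk : k • sing e ∈ I) {δ : ℕ} (hδ : ∀ g, IsMinGen I g → deg g ≤ δ) {t : ℕ} (hδt : δ ≤ t)
    (h : IsSegmentAt ord.lt I t) : IsSegmentAt ord.lt I (t + 1) := by
  intro τ σ hτ hdτ hdσ hlt
  by_contra hσ
  have hσ0 : 0 < σ 0 := Nat.pos_of_ne_zero fun hσ0 =>
    hσ (hI.mem_of_apply_zero_eq_zero he hk hδ hσ0 (by omega))
  have hσ' : σ - sing 0 + sing 0 = σ := tsub_add_cancel_of_le (sing_le_iff.2 hσ0)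
  obtain ⟨j, hj, hτj⟩ := exists_sub_sing_mem_of_not_isMinGen hI.1 hτ fun hmin => by
    have := hδ τ hmin
    omega
  have hτ' : τ - sing j + sing j = τ := tsub_add_cancel_of_le (sing_le_iff.2 hj)
  refine hσ (hσ' ▸ hI.1 _ (h _ _ hτj ?_ ?_ ?_) (sing 0))
  · have := deg_sub_sing_add_one hj
    omega
  · have := deg_sub_sing_add_one hσ0
    omega
  · exact ord.lt_of_add_sing_lt_add_sing_zero (by rwa [hτ', hσ'])

lemma of_ge (hI : IsBorelIdeal I) {e : Fin (n + 1)} (he : (e : ℕ) = 1) {k : ℕ}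
    (hk : k • sing e ∈ I) {δ : ℕ} (hδ : ∀ g, IsMinGen I g → deg g ≤ δ) {s t : ℕ}
    (hδt : δ ≤ t) (hts : t ≤ s) (h : IsSegmentAt ord.lt I t) : IsSegmentAt ord.lt I s := by
  induction s, hts using Nat.le_induction with
  | base => exact h
  | succ s hts ih => exact ih.succ hI he hk hδ (hδt.trans hts)

lemma isSegmentIdeal (hI : IsBorelIdeal I) (h0 : ∀ α : Expo n, α + sing 0 ∈ I → α ∈ I)
    {e : Fin (n + 1)} (he : (e : ℕ) = 1) {k : ℕ} (hk : k • sing e ∈ I) {δ : ℕ}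
    (hδ : ∀ g, IsMinGen I g → deg g ≤ δ) (h : IsSegmentAt ord.lt I δ) :
    IsSegmentIdeal ord.lt I := fun t =>
  (le_total t δ).elim (fun ht => h.of_le hI.1 h0 ht) (fun ht => h.of_ge hI he hk hδ le_rfl ht)

end IsSegmentAt

/-- A summand `binom(t + a_i - i, a_i)` with `a_i ≥ 1` is at least `t - i + 1`, so a bounded
polynomial has all `a_i = 0` and every summand equal to `1`. -/
lemma IsGotzmannDecomp.eval_eq_of_bounded {p : Polynomial ℚ} {r : ℕ}
    (hr : IsGotzmannDecomp p r) {N C : ℕ} (hC : ∀ t ≥ N, p.eval (t : ℚ) ≤ C) {t : ℕ}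
    (ht : r ≤ t) : p.eval (t : ℚ) = r := by
  obtain ⟨a, -, ha⟩ := hr
  have ha0 : ∀ i, a i = 0 := by
    intro i
    by_contra hai
    set T := N + r + C
    have hsummand : T - i + 1 ≤ (T + a i - i).choose (a i) := by
      rw [show T + a i - i = (T - i) + a i by omega, ← Nat.choose_symm_add,
        ← Nat.choose_succ_self_right]
      exact Nat.choose_le_choose _ (by omega)
    have hsum : ((T + a i - i).choose (a i) : ℚ) ≤ p.eval (T : ℚ) := by
      rw [ha T (by omega)]
      exact Finset.single_le_sum (f := fun j : Fin r => ((T + a j - j).choose (a j) : ℚ))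
        (fun _ _ => by positivity) (Finset.mem_univ i)
    have : T - i + 1 ≤ C := by
      exact_mod_cast (Nat.cast_le.2 hsummand).trans (hsum.trans (hC T (by omega)))
    omega
  simp [ha t ht, ha0]

section Counting

variable {n : ℕ} {I : Set (Expo n)}

lemma coIdeal_finite (I : Set (Expo n)) (t : ℕ) : (coIdeal I t).Finite :=
  (Set.Finite.pi fun _ => Set.finite_Iic t).subset fun α hα =>
    Set.mem_univ_pi.2 fun i => hα.1 ▸ apply_le_deg α i

/-- A term of degree `t` is determined by its exponents of `x_1, …, x_n`, and outside `I`
these are `< k`. -/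
lemma ncard_coIdeal_le (hmon : IsMonIdeal I) {k : ℕ}
    (hpow : ∀ i : Fin (n + 1), i ≠ 0 → k • sing i ∈ I) (t : ℕ) :
    (coIdeal I t).ncard ≤ k ^ n := by
  have hlt : ∀ α ∈ coIdeal I t, ∀ i : Fin n, α i.succ < k := by
    intro α hα i
    by_contra! hle
    have hkα : k • sing i.succ ≤ α := fun x => by
      by_cases hx : x = i.succ <;> simp_all [sing_apply]
    exact hα.2 (add_tsub_cancel_of_le hkα ▸ hmon _ (hpow _ (Fin.succ_ne_zero i)) _)
  have hinj : Set.InjOn (fun α : Expo n => fun i : Fin n => α i.succ) (coIdeal I t) := by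
    intro α hα β hβ hαβ
    have hsum : deg α = deg β := hα.1.trans hβ.1.symm
    simp only [deg, Fin.sum_univ_succ] at hsum
    simp only at hαβ
    funext x
    refine Fin.cases ?_ (fun i => congrFun hαβ i) x
    simp only [hαβ] at hsum
    omega
  calc (coIdeal I t).ncard
      ≤ (↑(Fintype.piFinset fun _ : Fin n => Finset.range k) : Set (Fin n → ℕ)).ncard :=
        Set.ncard_le_ncard_of_injOn _ (fun α hα => by simpa using hlt α hα) hinj
          (Finset.finite_toSet _)
    _ = k ^ n := by rw [Set.ncard_coe_finset, Fintype.card_piFinset]; simp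

/-- The witnesses are `b · x_0^{t - deg b}` for divisors `b` of `g` of each degree `< deg g`:
minimality of `g` keeps `b` outside `I`, and `x_0` is a non-zero-divisor modulo `I`. -/
lemma deg_le_ncard_coIdeal (h0 : ∀ α : Expo n, α + sing 0 ∈ I → α ∈ I) {g : Expo n}
    (hg : IsMinGen I g) {t : ℕ} (ht : deg g ≤ t) : deg g ≤ (coIdeal I t).ncard := by
  have hg0 := hg.apply_zero_eq_zero h0
  choose b hbg hbd using fun d : Fin (deg g) => exists_le_deg_eq g d.isLt.le
  have hbI : ∀ d, b d ∉ I := fun d hb => by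
    have hgb := hg.2 (b d) (g - b d) (add_tsub_cancel_of_le (hbg d)) hb
    have := (deg_mono (tsub_eq_zero_iff_le.1 hgb)).trans_eq (hbd d)
    have := d.isLt
    omega
  have hb0 : ∀ d, b d 0 = 0 := fun d => by simpa [hg0] using hbg d 0
  have hmaps : ∀ d ∈ Set.univ, b d + (t - d) • sing 0 ∈ coIdeal I t := fun d _ =>
    ⟨by rw [deg_add, deg_nsmul, deg_sing, hbd]; omega, add_nsmul_sing_zero_notMem h0 (hbI d) _⟩
  have hinj : Set.InjOn (fun d : Fin (deg g) => b d + (t - d) • sing 0) Set.univ := by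
    intro d₁ _ d₂ _ h
    have := congrFun h 0
    simp only [Pi.add_apply, Pi.smul_apply, hb0, sing_apply, smul_eq_mul] at this
    have := d₁.isLt
    have := d₂.isLt
    exact Fin.ext (by simp at *; omega)
  calc deg g = (Set.univ : Set (Fin (deg g))).ncard := by simp
    _ ≤ (coIdeal I t).ncard :=
      Set.ncard_le_ncard_of_injOn _ hmaps hinj (coIdeal_finite I t)

lemma HasHilbPoly.eventually_ncard_coIdeal_eq {p : Polynomial ℚ} (hp : HasHilbPoly I p) {r : ℕ}
    (hr : IsGotzmannDecomp p r) {C : ℕ} (hC : ∀ t, (coIdeal I t).ncard ≤ C) :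
    ∃ N, ∀ t ≥ N, (coIdeal I t).ncard = r := by
  obtain ⟨N, hN⟩ := hp
  refine ⟨max N r, fun t ht => ?_⟩
  have hpC : ∀ t ≥ N, p.eval (t : ℚ) ≤ C := fun t ht => hN t ht ▸ by exact_mod_cast hC t
  exact_mod_cast (hN t (le_of_max_le_left ht)).trans
    (hr.eval_eq_of_bounded hpC (le_of_max_le_right ht))

lemma IsMaxGenDeg.le_of_eventually_ncard_coIdeal_eq (h0 : ∀ α : Expo n, α + sing 0 ∈ I → α ∈ I)
    {δ : ℕ} (hδ : IsMaxGenDeg I δ) {r N : ℕ} (hN : ∀ t ≥ N, (coIdeal I t).ncard = r) : δ ≤ r := by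
  obtain ⟨g, hg, rfl⟩ := hδ.1
  rw [← hN (max N (deg g)) (le_max_left _ _)]
  exact deg_le_ncard_coIdeal h0 hg (le_max_right _ _)

end Counting

/-- For a nonzero saturated Borel ideal `I` containing a power of `x_1`
(so the scheme defined by `I` is 0-dimensional) and a term order `≺`:
reg-segment ⟹ segment ideal; hence segment ideal, hilb-segment and reg-segment are
equivalent (with `r` the Gotzmann number and `δ` the maximal degree of a minimal
generator). -/
theorem segment_equivalences_dim_zero {n : ℕ} (hn : 1 ≤ n)
    (I : Set (Expo n)) (hI : IsBorelIdeal I)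
    (hsat : IsSaturatedIdeal I)
    (k : ℕ) (hx1 : k • sing (⟨1, by omega⟩ : Fin (n + 1)) ∈ I)
    (ord : TermOrder n)
    (p : Polynomial ℚ) (hp : HasHilbPoly I p)
    (r : ℕ) (hr : IsGotzmannDecomp p r)
    (δ : ℕ) (hδ : IsMaxGenDeg I δ) :
    (IsSegmentAt ord.lt I δ → IsSegmentIdeal ord.lt I) ∧
    (IsSegmentIdeal ord.lt I ↔ IsSegmentAt ord.lt I r) ∧
    (IsSegmentAt ord.lt I r ↔ IsSegmentAt ord.lt I δ) := by
  have he : ((⟨1, by omega⟩ : Fin (n + 1)) : ℕ) = 1 := rfl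
  have hpow : ∀ i : Fin (n + 1), i ≠ 0 → k • sing i ∈ I := fun i hi => by
    simpa using hI.2.add_nsmul_sing_mem_of_le (c := 0)
      (Fin.le_def.2 (Nat.one_le_iff_ne_zero.2 (Fin.val_ne_zero_iff.2 hi))) k (by simpa using hx1)
  have h0 : ∀ α : Expo n, α + sing 0 ∈ I → α ∈ I := fun _ =>
    mem_of_add_sing_zero_mem hI.1 hsat hpow
  obtain ⟨N, hN⟩ := hp.eventually_ncard_coIdeal_eq hr (ncard_coIdeal_le hI.1 hpow)
  have hδr : δ ≤ r := hδ.le_of_eventually_ncard_coIdeal_eq h0 hN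
  have hseg : IsSegmentAt ord.lt I δ → IsSegmentIdeal ord.lt I :=
    IsSegmentAt.isSegmentIdeal hI h0 he hx1 hδ.2
  have hdown : IsSegmentAt ord.lt I r → IsSegmentAt ord.lt I δ := IsSegmentAt.of_le hI.1 h0 hδr
  exact ⟨hseg, ⟨fun h => h r, fun h => hseg (hdown h)⟩, ⟨hdown, fun h => hseg h r⟩⟩
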